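/- arXiv:2308.06803 — 10 statements merged into one kernel-verified Lean document; each statement's English description precedes it below -/
import Mathlib

section
/- Let V be a 4-dimensional real vector space with a nondegenerate symmetric bilinear form g, and let DR, DT : V → Sym²(V*) be linear maps (the values at a point of the covariant derivatives ∇_j R_{kl} and ∇_j T_{kl} of the Ricci and stress-energy tensors). Set dR(j) = tr_g(DR_j) and dT(j) = tr_g(DT_j). Define H(j,k,l) = DR_j(k,l) + DR_k(l,j) + DR_l(j,k) − (1/3)[g(k,l)dR(j) + g(l,j)dR(k) + g(j,k)dR(l)] and T(j,k,l) = DT_j(k,l) + DT_k(l,j) + DT_l(j,k) − (1/6)[g(k,l)dT(j) + g(l,j)dT(k) + g(j,k)dT(l)], and define DK_j = DR_j − (1/2)dR(j)·g − DT_j with dK(j) = tr_g(DK_j) = −dR(j) − dT(j). Then H(j,k,l) = T(j,k,l) for all j,k,l ∈ V if and only if DK_j(k,l) + DK_k(l,j) + DK_l(j,k) = (1/6)[g(k,l)dK(j) + g(l,j)dK(k) + g(j,k)dK(l)] for all j,k,l ∈ V. (This is the pointwise algebraic content of the equivalence of Harada's gravitational equation H_{jkl} = T_{jkl} with the Einstein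 equation modified by a divergence-free conformal Killing tensor K_{jk} = R_{jk} − (R/2)g_{jk} − T_{jk}.) -/
/-! In dimension 4 the trace of `K = R - (R/2) g - T` is `-R - T`. Substituting this and the
definition of `K` into the conformal Killing equation and moving everything to one side, the
`g`-terms of `∇K` contribute `-1/2` and those of `∇(tr K)` contribute `+1/6`, which add up to the
`-1/3` of Harada's tensor `H`, while the `T`-terms reproduce Harada's `T`. So the defect of the
conformal Killing equation is exactly `H - T`. -/

open LinearMap (BilinForm)

/-- The trace of a bilinear form `B` with respect to a nondegenerate bilinear form `g`
(contraction of `B` with the inverse of `g`), i.e. the trace of the endomorphism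
`g⁻¹ ∘ B`. -/
noncomputable def traceG {V : Type*} [AddCommGroup V] [Module ℝ V] [FiniteDimensional ℝ V]
    (g : BilinForm ℝ V) (hg : g.Nondegenerate) (B : BilinForm ℝ V) : ℝ :=
  LinearMap.trace ℝ V (((LinearMap.BilinForm.toDual g hg).symm : Module.Dual ℝ V →ₗ[ℝ] V) ∘ₗ B)

section traceG

variable {V : Type*} [AddCommGroup V] [Module ℝ V] [FiniteDimensional ℝ V]
  (g : BilinForm ℝ V) (hg : g.Nondegenerate)

theorem traceG_sub (B C : BilinForm ℝ V) :
    traceG g hg (B - C) = traceG g hg B - traceG g hg C := by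
  simp only [traceG, LinearMap.comp_sub, map_sub]

theorem traceG_smul (c : ℝ) (B : BilinForm ℝ V) :
    traceG g hg (c • B) = c * traceG g hg B := by
  simp only [traceG, LinearMap.comp_smul, map_smul, smul_eq_mul]

theorem traceG_self : traceG g hg g = Module.finrank ℝ V := by
  have hid : ((LinearMap.BilinForm.toDual g hg).symm : Module.Dual ℝ V →ₗ[ℝ] V) ∘ₗ g
      = LinearMap.id := by
    ext v
    exact (LinearMap.BilinForm.toDual g hg).symm_apply_apply v
  rw [traceG, hid, LinearMap.trace_id]

end traceG

theorem harada_eq_iff_conformal_killing_general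
    {V : Type*} [AddCommGroup V] [Module ℝ V] [FiniteDimensional ℝ V]
    (hdim : Module.finrank ℝ V = 4)
    (g : BilinForm ℝ V) (hg : g.Nondegenerate)
    (DR DT : V →ₗ[ℝ] BilinForm ℝ V)
    (dR : V → ℝ) (hdR : ∀ j, dR j = traceG g hg (DR j))
    (dT : V → ℝ) (hdT : ∀ j, dT j = traceG g hg (DT j))
    (H T : V → V → V → ℝ)
    (hH : ∀ j k l, H j k l = DR j k l + DR k l j + DR l j k
      - (1/3) * (g k l * dR j + g l j * dR k + g j k * dR l))
    (hT : ∀ j k l, T j k l = DT j k l + DT k l j + DT l j k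
      - (1/6) * (g k l * dT j + g l j * dT k + g j k * dT l))
    (DK : V → BilinForm ℝ V)
    (hDK : ∀ j, DK j = DR j - (dR j / 2) • g - DT j)
    (dK : V → ℝ) (hdK : ∀ j, dK j = traceG g hg (DK j)) :
    (∀ j k l, H j k l = T j k l) ↔
      (∀ j k l, DK j k l + DK k l j + DK l j k
        = (1/6) * (g k l * dK j + g l j * dK k + g j k * dK l)) := by
  have hdK_eq : ∀ j, dK j = -dR j - dT j := fun j => by
    rw [hdK, hDK, traceG_sub, traceG_sub, traceG_smul, traceG_self, hdim, ← hdR, ← hdT]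
    ring
  have hDK_apply : ∀ j k l, DK j k l = DR j k l - dR j / 2 * g k l - DT j k l := fun j k l => by
    simp only [hDK, LinearMap.sub_apply, LinearMap.smul_apply, smul_eq_mul]
  have defect_eq : ∀ j k l, H j k l - T j k l = DK j k l + DK k l j + DK l j k
      - (1/6) * (g k l * dK j + g l j * dK k + g j k * dK l) := fun j k l => by
    rw [hH, hT, hDK_apply, hDK_apply, hDK_apply, hdK_eq, hdK_eq, hdK_eq]
    ring
  exact forall₃_congr fun j k l => by rw [← sub_eq_zero, defect_eq, sub_eq_zero]

/-- Harada's equation `H_{jkl} = T_{jkl}` is equivalent to the statement that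
`K_{jk} = R_{jk} - (R/2) g_{jk} - T_{jk}` is a (divergence-free) conformal Killing tensor,
i.e. `∇_j K_{kl} + ∇_k K_{lj} + ∇_l K_{jk} = (1/6)(g_{kl} ∇_j K + g_{lj} ∇_k K + g_{jk} ∇_l K)`. -/
theorem harada_eq_iff_conformal_killing
    {V : Type*} [AddCommGroup V] [Module ℝ V] [FiniteDimensional ℝ V]
    (hdim : Module.finrank ℝ V = 4)
    (g : BilinForm ℝ V) (hgsymm : g.IsSymm) (hg : g.Nondegenerate)
    (DR DT : V →ₗ[ℝ] BilinForm ℝ V)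
    (hDRsymm : ∀ j, (DR j).IsSymm) (hDTsymm : ∀ j, (DT j).IsSymm)
    (dR : V → ℝ) (hdR : ∀ j, dR j = traceG g hg (DR j))
    (dT : V → ℝ) (hdT : ∀ j, dT j = traceG g hg (DT j))
    (H T : V → V → V → ℝ)
    (hH : ∀ j k l, H j k l = DR j k l + DR k l j + DR l j k
      - (1/3) * (g k l * dR j + g l j * dR k + g j k * dR l))
    (hT : ∀ j k l, T j k l = DT j k l + DT k l j + DT l j k
      - (1/6) * (g k l * dT j + g l j * dT k + g j k * dT l))
    (DK : V → BilinForm ℝ V)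
    (hDK : ∀ j, DK j = DR j - (dR j / 2) • g - DT j)
    (dK : V → ℝ) (hdK : ∀ j, dK j = traceG g hg (DK j)) :
    (∀ j k l, H j k l = T j k l) ↔
      (∀ j k l, DK j k l + DK k l j + DK l j k
        = (1/6) * (g k l * dK j + g l j * dK k + g j k * dK l)) :=
  harada_eq_iff_conformal_killing_general hdim g hg DR DT dR hdR dT hdT H T hH hT DK hDK dK hdK
end

section
/- Let V be a 4-dimensional real vector space with a nondegenerate symmetric bilinear form g, u ∈ V with g(u,u) = −1 and u♭ = g(u,·). Let λ, λ', Λ be real numbers with 2λ + 2Λ ≠ 0, and set H = λ'/(2λ + 2Λ). Define the derivative data Du(j,k) = H(u♭(j)u♭(k) + g(j,k)) (the value of ∇_j u_k in a generalized Robertson-Walker spacetime) and Dλ(j) = −λ'·u♭(j) (the gradient of λ), and define, by the Leibniz rule, DK_j(k,l) = (5/3)Dλ(j)g(k,l) + (2/3)Dλ(j)u♭(k)u♭(l) + ((2λ+2Λ)/3)(Du(j,k)u♭(l) + u♭(k)Du(j,l)), the derivative datum of the tensor K = ((5λ+2Λ)/3)g + ((2λ+2Λ)/3)u♭⊗u♭.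 Then the conformal Killing identity holds with associated conformal vector η = Dλ: for all j,k,l ∈ V, DK_j(k,l) + DK_k(l,j) + DK_l(j,k) = Dλ(j)g(k,l) + Dλ(k)g(l,j) + Dλ(l)g(j,k). -/
open LinearMap (BilinForm)

/-- For `∇_j u_k = H (u_j u_k + g_jk)`, the cyclic sum of `∇_j (u_k u_l)`. -/
theorem cyclic_sum_leibniz_flat_sq {R V : Type*} [CommRing R] [AddCommGroup V] [Module R V]
    {g : BilinForm R V} (hg : g.IsSymm) (u : V) (H : R) (Du : V → V → R)
    (hDu : ∀ j k, Du j k = H * (g u j * g u k + g j k)) (j k l : V) :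
    (Du j k * g u l + g u k * Du j l) + (Du k l * g u j + g u l * Du k j)
        + (Du l j * g u k + g u j * Du l k)
      = 2 * H * (3 * (g u j * g u k * g u l) + g u j * g k l + g u k * g l j + g u l * g j k) := by
  simp only [hDu, hg.eq k j, hg.eq l k, hg.eq j l]
  ring

theorem GRW_tensor_is_conformal_killing_general
    {V : Type*} [AddCommGroup V] [Module ℝ V]
    (g : BilinForm ℝ V) (hgsymm : g.IsSymm)
    (u : V)
    (lam lam' Λ : ℝ) (hΛ : 2*lam + 2*Λ ≠ 0)
    (H : ℝ) (hH : H = lam' / (2*lam + 2*Λ))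
    (Du : V → V → ℝ)
    (hDu : ∀ j k, Du j k = H * (g u j * g u k + g j k))
    (Dlam : V → ℝ) (hDlam : ∀ j, Dlam j = -lam' * g u j)
    (DK : V → V → V → ℝ)
    (hDK : ∀ j k l, DK j k l = (5/3) * Dlam j * g k l
      + (2/3) * Dlam j * g u k * g u l
      + ((2*lam + 2*Λ)/3) * (Du j k * g u l + g u k * Du j l)) :
    ∀ j k l, DK j k l + DK k l j + DK l j k
      = Dlam j * g k l + Dlam k * g l j + Dlam l * g j k := by
  intro j k l
  -- this cancels the `u♭ ⊗ u♭ ⊗ u♭` part of `∇K` against the one coming from `∇λ`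
  have hHubble : (2*lam + 2*Λ) / 3 * H = lam' / 3 := by
    rw [hH, div_mul_div_comm, mul_comm 3, mul_div_mul_left _ _ hΛ]
  have hcyc := cyclic_sum_leibniz_flat_sq hgsymm u H Du hDu j k l
  calc DK j k l + DK k l j + DK l j k
      = (5/3) * (Dlam j * g k l + Dlam k * g l j + Dlam l * g j k)
        + (2/3) * (Dlam j * g u k * g u l + Dlam k * g u l * g u j + Dlam l * g u j * g u k)
        + (2*lam + 2*Λ) / 3 * ((Du j k * g u l + g u k * Du j l)
          + (Du k l * g u j + g u l * Du k j) + (Du l j * g u k + g u j * Du l k)) := by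
        simp only [hDK]; ring
    _ = Dlam j * g k l + Dlam k * g l j + Dlam l * g j k := by
        rw [hcyc]
        simp only [hDlam]
        linear_combination 2 * (3 * (g u j * g u k * g u l) + g u j * g k l + g u k * g l j
          + g u l * g j k) * hHubble

/-- The tensor `K = ((5λ+2Λ)/3) g + ((2λ+2Λ)/3) u♭⊗u♭` of eq. (1.9), with derivative datum
built by the Leibniz rule from `∇_j u_k = H(u_j u_k + g_jk)` and `∇_j λ = -λ̇ u_j`
(where `H = λ̇/(2λ+2Λ)`), satisfies the conformal Killing identity with associated
conformal vector `η = ∇λ`. -/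
theorem GRW_tensor_is_conformal_killing
    {V : Type*} [AddCommGroup V] [Module ℝ V] [FiniteDimensional ℝ V]
    (hdim : Module.finrank ℝ V = 4)
    (g : BilinForm ℝ V) (hgsymm : g.IsSymm) (hg : g.Nondegenerate)
    (u : V) (hu : g u u = -1)
    (lam lam' Λ : ℝ) (hΛ : 2*lam + 2*Λ ≠ 0)
    (H : ℝ) (hH : H = lam' / (2*lam + 2*Λ))
    (Du : V → V → ℝ)
    (hDu : ∀ j k, Du j k = H * (g u j * g u k + g j k))
    (Dlam : V → ℝ) (hDlam : ∀ j, Dlam j = -lam' * g u j)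
    (DK : V → V → V → ℝ)
    (hDK : ∀ j k l, DK j k l = (5/3) * Dlam j * g k l
      + (2/3) * Dlam j * g u k * g u l
      + ((2*lam + 2*Λ)/3) * (Du j k * g u l + g u k * Du j l)) :
    ∀ j k l, DK j k l + DK k l j + DK l j k
      = Dlam j * g k l + Dlam k * g l j + Dlam l * g j k :=
  GRW_tensor_is_conformal_killing_general g hgsymm u lam lam' Λ hΛ H hH Du hDu Dlam hDlam DK hDK
end

section
/- Let V be a 4-dimensional real vector space with a nondegenerate symmetric bilinear form g. Let X ∈ V*, let α, ψ be real numbers, let DX : V × V → ℝ be a bilinear form (the derivative datum ∇_j X_k of a conformal Killing covector) satisfying DX(j,k) + DX(k,j) = 2ψ·g(j,k) for all j,k ∈ V, and let Dβ ∈ V* (the gradient of a function β). Define the derivative datum DK_j(k,l) = α(DX(j,k)X(l) + X(k)DX(j,l)) + Dβ(j)g(k,l) of the tensor K = α X⊗X + β g. Then the conformal Killing identity holds: for all j,k,l ∈ V, DK_j(k,l) + DK_k(l,j) + DK_l(j,k) = η(j)g(k,l) + η(k)g(l,j) + η(l)g(j,k), where η = 2αψ·X + Dβ ∈ V*. -/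
open LinearMap (BilinForm)

/- The Leibniz terms of `α X⊗X` pair each `DX` with a factor `X`; in the cyclic sum every
such pair occurs symmetrised, `DX(j,k) + DX(k,j) = 2ψ g(j,k)`, which produces the trace part
`2αψ X`. The `β g` part contributes `Dβ` directly. -/

section

variable {R M : Type*} [CommRing R] [AddCommGroup M] [Module R M]

theorem cyclic_sum_leibniz_of_conformal {g DX : BilinForm R M} (hgsymm : g.IsSymm)
    (X : Module.Dual R M) {ψ : R} (hDX : ∀ j k, DX j k + DX k j = 2 * ψ * g j k) (j k l : M) :
    (DX j k * X l + X k * DX j l) + (DX k l * X j + X l * DX k j)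
        + (DX l j * X k + X j * DX l k)
      = 2 * ψ * (X j * g k l + X k * g l j + X l * g j k) := by
  have hjk : g j k = g k j := hgsymm.eq j k
  have hkl : g k l = g l k := hgsymm.eq k l
  have hlj : g l j = g j l := hgsymm.eq l j
  linear_combination X l * hDX j k + X j * hDX k l + X k * hDX l j

end

theorem conformal_killing_tensor_from_conformal_killing_vector_general
    {V : Type*} [AddCommGroup V] [Module ℝ V]
    (g : BilinForm ℝ V) (hgsymm : g.IsSymm)
    (X : Module.Dual ℝ V) (α ψ : ℝ)
    (DX : BilinForm ℝ V)
    (hDX : ∀ j k, DX j k + DX k j = 2 * ψ * g j k)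
    (Dβ : Module.Dual ℝ V)
    (DK : V → V → V → ℝ)
    (hDK : ∀ j k l, DK j k l = α * (DX j k * X l + X k * DX j l) + Dβ j * g k l)
    (η : Module.Dual ℝ V) (hη : η = (2 * α * ψ) • X + Dβ) :
    ∀ j k l, DK j k l + DK k l j + DK l j k
      = η j * g k l + η k * g l j + η l * g j k := by
  intro j k l
  have hcyc := cyclic_sum_leibniz_of_conformal hgsymm X hDX j k l
  simp only [hDK, hη, LinearMap.add_apply, LinearMap.smul_apply, smul_eq_mul]
  linear_combination α * hcyc

/-- Pointwise content of the Rani–Edgar–Barnes construction: if `X` is a (conformal Killing)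
covector with derivative datum `DX` satisfying `DX(j,k) + DX(k,j) = 2ψ g(j,k)`, then the
tensor `K = α X⊗X + β g`, with derivative datum built by the Leibniz rule, satisfies the
conformal Killing identity with associated conformal vector `η = 2αψ X + Dβ`. -/
theorem conformal_killing_tensor_from_conformal_killing_vector
    {V : Type*} [AddCommGroup V] [Module ℝ V] [FiniteDimensional ℝ V]
    (hdim : Module.finrank ℝ V = 4)
    (g : BilinForm ℝ V) (hgsymm : g.IsSymm) (hg : g.Nondegenerate)
    (X : Module.Dual ℝ V) (α ψ : ℝ)
    (DX : BilinForm ℝ V)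
    (hDX : ∀ j k, DX j k + DX k j = 2 * ψ * g j k)
    (Dβ : Module.Dual ℝ V)
    (DK : V → V → V → ℝ)
    (hDK : ∀ j k l, DK j k l = α * (DX j k * X l + X k * DX j l) + Dβ j * g k l)
    (η : Module.Dual ℝ V) (hη : η = (2 * α * ψ) • X + Dβ) :
    ∀ j k l, DK j k l + DK k l j + DK l j k
      = η j * g k l + η k * g l j + η l * g j k :=
  conformal_killing_tensor_from_conformal_killing_vector_general g hgsymm X α ψ DX hDX Dβ DK hDK η
    hη
end

section
/- Let I ⊆ ℝ be an open interval, let C, Λ, R⋆ ∈ ℝ, and let a : I → ℝ be a twice differentiable positive function satisfying the pressure-free modified Friedmann equation 0 = 2·(d/dt)(a'(t)·√(a(t))) + (5/6)C·a(t)^{7/2} − Λ·a(t)^{3/2} + (R⋆/6)·a(t)^{−1/2} on I. Then there exists a constant D ∈ ℝ such that for all t ∈ I, (a'(t)/a(t))² = −(C/6)a(t)² + Λ/3 − R⋆/(6a(t)²) + D/a(t)³. -/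
/-!
Multiplying the equation by `ȧ √a` turns it into the exact derivative of
`E = ȧ² a + (C/6) a⁵ - (Λ/3) a³ + (R⋆/6) a`, since `ȧ √a · 2 d/dt(ȧ √a) = d/dt(ȧ² a)` and
`ȧ √a · a^{k - 1/2} = ȧ a^k`. Hence `E` is constant on the interval, and dividing `E = D` by `a³`
gives the first integral.
-/

open Real

theorem IsPreconnected.apply_eq_of_hasDerivAt_eq_zero {E : Type*} [NormedAddCommGroup E]
    [NormedSpace ℝ E] {s : Set ℝ} {f : ℝ → E} (hs : IsPreconnected s)
    (hf : ∀ x ∈ s, HasDerivAt f 0 x) {x y : ℝ} (hx : x ∈ s) (hy : y ∈ s) : f x = f y := by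
  have h := hs.ordConnected.convex.norm_image_sub_le_of_norm_hasDerivWithin_le
    (fun z hz => (hf z hz).hasDerivWithinAt) (fun _ _ => (norm_zero (E := E)).le) hx hy
  rw [zero_mul, norm_le_zero_iff, sub_eq_zero] at h
  exact h.symm

theorem Real.rpow_mul_sqrt {x : ℝ} (hx : 0 < x) (y : ℝ) : x ^ y * √x = x ^ (y + 1 / 2) := by
  rw [sqrt_eq_rpow, ← rpow_add hx]

noncomputable def friedmannEnergy (C Λ Rstar x v : ℝ) : ℝ :=
  v ^ 2 * x + C / 6 * x ^ 5 - Λ / 3 * x ^ 3 + Rstar / 6 * x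

theorem hasDerivAt_friedmannEnergy (C Λ Rstar : ℝ) {a a' : ℝ → ℝ} {a'' t : ℝ}
    (ha : HasDerivAt a (a' t) t) (ha' : HasDerivAt a' a'' t) (hpos : 0 < a t) :
    HasDerivAt (fun s => friedmannEnergy C Λ Rstar (a s) (a' s))
      (a' t * √(a t) * (2 * deriv (fun s => a' s * √(a s)) t
        + 5 / 6 * C * a t ^ ((7 : ℝ) / 2) - Λ * a t ^ ((3 : ℝ) / 2)
        + Rstar / 6 * a t ^ (-(1 : ℝ) / 2))) t := by
  have hmomentum : HasDerivAt (fun s => a' s * √(a s))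
      (a'' * √(a t) + a' t * (a' t / (2 * √(a t)))) t :=
    ha'.mul (ha.sqrt hpos.ne')
  have henergy : HasDerivAt (fun s => friedmannEnergy C Λ Rstar (a s) (a' s))
      (2 * a' t * a'' * a t + a' t ^ 2 * a' t + C / 6 * (5 * a t ^ 4 * a' t)
        - Λ / 3 * (3 * a t ^ 2 * a' t) + Rstar / 6 * a' t) t := by
    have := ((((ha'.fun_pow 2).mul ha).add ((ha.fun_pow 5).const_mul (C / 6))).sub
      ((ha.fun_pow 3).const_mul (Λ / 3))).add (ha.const_mul (Rstar / 6))
    exact this.congr_deriv (by push_cast; ring)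
  convert henergy using 1
  have hsqrt : √(a t) * √(a t) = a t := mul_self_sqrt hpos.le
  have hhalf : √(a t) * (a' t / (2 * √(a t))) = a' t / 2 := by
    field_simp [(sqrt_pos.2 hpos).ne']
  have h7 : a t ^ ((7 : ℝ) / 2) * √(a t) = a t ^ 4 := by rw [rpow_mul_sqrt hpos]; norm_num
  have h3 : a t ^ ((3 : ℝ) / 2) * √(a t) = a t ^ 2 := by rw [rpow_mul_sqrt hpos]; norm_num
  have h1 : a t ^ (-(1 : ℝ) / 2) * √(a t) = 1 := by rw [rpow_mul_sqrt hpos]; norm_num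
  rw [hmomentum.deriv]
  linear_combination 2 * a' t * a'' * hsqrt + 2 * a' t ^ 2 * hhalf + 5 / 6 * C * a' t * h7
    - Λ * a' t * h3 + Rstar / 6 * a' t * h1

theorem sq_div_eq_of_friedmannEnergy_eq {C Λ Rstar x v D : ℝ} (hx : x ≠ 0)
    (h : friedmannEnergy C Λ Rstar x v = D) :
    (v / x) ^ 2 = -(C / 6) * x ^ 2 + Λ / 3 - Rstar / (6 * x ^ 2) + D / x ^ 3 := by
  rw [← h, friedmannEnergy]
  field_simp
  ring

theorem friedmann_first_integral_general
    (I : Set ℝ) (hIconn : IsPreconnected I)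
    (C Λ Rstar : ℝ) (a a' a'' : ℝ → ℝ)
    (ha' : ∀ t ∈ I, HasDerivAt a (a' t) t)
    (ha'' : ∀ t ∈ I, HasDerivAt a' (a'' t) t)
    (hapos : ∀ t ∈ I, a t > 0)
    (hODE : ∀ t ∈ I, 0 = 2 * deriv (fun s => a' s * Real.sqrt (a s)) t
      + (5/6) * C * (a t) ^ ((7:ℝ)/2) - Λ * (a t) ^ ((3:ℝ)/2)
      + (Rstar/6) * (a t) ^ (-(1:ℝ)/2)) :
    ∃ D : ℝ, ∀ t ∈ I, (a' t / a t) ^ 2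
      = -(C/6) * (a t) ^ 2 + Λ/3 - Rstar / (6 * (a t) ^ 2) + D / (a t) ^ 3 := by
  obtain rfl | ⟨t₀, ht₀⟩ := I.eq_empty_or_nonempty
  · exact ⟨0, fun t ht => ht.elim⟩
  have hconserved : ∀ t ∈ I,
      HasDerivAt (fun s => friedmannEnergy C Λ Rstar (a s) (a' s)) 0 t := by
    intro t ht
    simpa [← hODE t ht] using
      hasDerivAt_friedmannEnergy C Λ Rstar (ha' t ht) (ha'' t ht) (hapos t ht)
  refine ⟨friedmannEnergy C Λ Rstar (a t₀) (a' t₀), fun t ht => ?_⟩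
  exact sq_div_eq_of_friedmannEnergy_eq (hapos t ht).ne'
    (hIconn.apply_eq_of_hasDerivAt_eq_zero hconserved ht ht₀)

/-- The pressure-free first modified Friedmann equation of Conformal Killing gravity,
`0 = 2 d/dt(ȧ √a) + (5/6) C a^{7/2} - Λ a^{3/2} + (R⋆/6) a^{-1/2}`, has the first integral
`(ȧ/a)² = -(C/6) a² + Λ/3 - R⋆/(6a²) + D/a³`. -/
theorem friedmann_first_integral
    (I : Set ℝ) (hIopen : IsOpen I) (hIconn : IsPreconnected I)
    (C Λ Rstar : ℝ) (a a' a'' : ℝ → ℝ)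
    (ha' : ∀ t ∈ I, HasDerivAt a (a' t) t)
    (ha'' : ∀ t ∈ I, HasDerivAt a' (a'' t) t)
    (hapos : ∀ t ∈ I, a t > 0)
    (hODE : ∀ t ∈ I, 0 = 2 * deriv (fun s => a' s * Real.sqrt (a s)) t
      + (5/6) * C * (a t) ^ ((7:ℝ)/2) - Λ * (a t) ^ ((3:ℝ)/2)
      + (Rstar/6) * (a t) ^ (-(1:ℝ)/2)) :
    ∃ D : ℝ, ∀ t ∈ I, (a' t / a t) ^ 2
      = -(C/6) * (a t) ^ 2 + Λ/3 - Rstar / (6 * (a t) ^ 2) + D / (a t) ^ 3 :=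
  friedmann_first_integral_general I hIconn C Λ Rstar a a' a'' ha' ha'' hapos hODE
end

section
/- Let I ⊆ ℝ be an open interval, let C, Λ, R⋆, D ∈ ℝ, and let a : I → ℝ be a twice differentiable positive function satisfying both 0 = 2·(d/dt)(a'(t)·√(a(t))) + (5/6)C·a(t)^{7/2} − Λ·a(t)^{3/2} + (R⋆/6)·a(t)^{−1/2} and (a'(t)/a(t))² = −(C/6)a(t)² + Λ/3 − R⋆/(6a(t)²) + D/a(t)³ on I. Then for all t ∈ I, a''(t)/a(t) = Λ/3 − (1/3)C·a(t)² − D/(2a(t)³). -/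
/-!
With `a = x`, `ȧ = v`, `ä = acc`, multiplying the first modified Friedmann equation by `√a`
clears every half-integer power and gives `2 a ä + ȧ² + (5/6) C a⁴ - Λ a² + R⋆/6 = 0`.
Eliminating `ȧ²` with the first integral leaves `ä/a` as a function of `a` alone.
-/

open Real

lemma rpow_natCast_add_half {x : ℝ} (hx : 0 < x) (n : ℕ) :
    x ^ ((n : ℝ) + 1 / 2) = x ^ n * √x := by
  rw [rpow_add hx, rpow_natCast, sqrt_eq_rpow]

lemma rpow_neg_half {x : ℝ} (hx : 0 ≤ x) : x ^ (-(1 : ℝ) / 2) = (√x)⁻¹ := by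
  rw [neg_div, rpow_neg hx, sqrt_eq_rpow]

lemma HasDerivAt.mul_sqrt {f g : ℝ → ℝ} {f' g' t : ℝ} (hf : HasDerivAt f f' t)
    (hg : HasDerivAt g g' t) (hft : f t ≠ 0) :
    HasDerivAt (fun s => g s * √(f s)) (g' * √(f t) + g t * f' / (2 * √(f t))) t := by
  simpa only [mul_div_assoc] using hg.fun_mul (hf.sqrt hft)

lemma friedmann_first_clear_sqrt {C Λ R x v acc : ℝ} (hx : 0 < x)
    (h : 0 = 2 * (acc * √x + v * v / (2 * √x)) + 5 / 6 * C * (x ^ 3 * √x) - Λ * (x * √x)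
      + R / 6 * (√x)⁻¹) :
    2 * acc * x + v ^ 2 + 5 / 6 * C * x ^ 4 - Λ * x ^ 2 + R / 6 = 0 := by
  have hsq : √x ^ 2 = x := sq_sqrt hx.le
  field_simp at h
  linear_combination (-1 / 6) * h - (2 * acc + 5 / 6 * C * x ^ 3 - Λ * x) * hsq

lemma acceleration_eq_of_friedmann_first_cleared {C Λ R D x v acc : ℝ} (hx : 0 < x)
    (hE : 2 * acc * x + v ^ 2 + 5 / 6 * C * x ^ 4 - Λ * x ^ 2 + R / 6 = 0)
    (hFI : (v / x) ^ 2 = -(C / 6) * x ^ 2 + Λ / 3 - R / (6 * x ^ 2) + D / x ^ 3) :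
    acc / x = Λ / 3 - (1 / 3) * C * x ^ 2 - D / (2 * x ^ 3) := by
  field_simp at hFI ⊢
  linear_combination 3 * x * hE - hFI / 6

theorem friedmann_acceleration_equation_general
    (I : Set ℝ)
    (C Λ Rstar D : ℝ) (a a' a'' : ℝ → ℝ)
    (ha' : ∀ t ∈ I, HasDerivAt a (a' t) t)
    (ha'' : ∀ t ∈ I, HasDerivAt a' (a'' t) t)
    (hapos : ∀ t ∈ I, a t > 0)
    (hODE : ∀ t ∈ I, 0 = 2 * deriv (fun s => a' s * Real.sqrt (a s)) t
      + (5/6) * C * (a t) ^ ((7:ℝ)/2) - Λ * (a t) ^ ((3:ℝ)/2)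
      + (Rstar/6) * (a t) ^ (-(1:ℝ)/2))
    (hFI : ∀ t ∈ I, (a' t / a t) ^ 2
      = -(C/6) * (a t) ^ 2 + Λ/3 - Rstar / (6 * (a t) ^ 2) + D / (a t) ^ 3) :
    ∀ t ∈ I, a'' t / a t = Λ/3 - (1/3) * C * (a t) ^ 2 - D / (2 * (a t) ^ 3) := by
  intro t ht
  have hx := hapos t ht
  have hODEt := hODE t ht
  rw [((ha' t ht).mul_sqrt (ha'' t ht) hx.ne').deriv,
    show (7 : ℝ) / 2 = (3 : ℕ) + 1 / 2 by norm_num, show (3 : ℝ) / 2 = (1 : ℕ) + 1 / 2 by norm_num,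
    rpow_natCast_add_half hx, rpow_natCast_add_half hx, pow_one, rpow_neg_half hx.le] at hODEt
  exact acceleration_eq_of_friedmann_first_cleared hx (friedmann_first_clear_sqrt hx hODEt)
    (hFI t ht)

/-- The second modified Friedmann equation `ä/a = Λ/3 - (1/3) C a² - D/(2a³)` follows from
the pressure-free first modified Friedmann equation and its first integral. -/
theorem friedmann_acceleration_equation
    (I : Set ℝ) (hIopen : IsOpen I) (hIconn : IsPreconnected I)
    (C Λ Rstar D : ℝ) (a a' a'' : ℝ → ℝ)
    (ha' : ∀ t ∈ I, HasDerivAt a (a' t) t)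
    (ha'' : ∀ t ∈ I, HasDerivAt a' (a'' t) t)
    (hapos : ∀ t ∈ I, a t > 0)
    (hODE : ∀ t ∈ I, 0 = 2 * deriv (fun s => a' s * Real.sqrt (a s)) t
      + (5/6) * C * (a t) ^ ((7:ℝ)/2) - Λ * (a t) ^ ((3:ℝ)/2)
      + (Rstar/6) * (a t) ^ (-(1:ℝ)/2))
    (hFI : ∀ t ∈ I, (a' t / a t) ^ 2
      = -(C/6) * (a t) ^ 2 + Λ/3 - Rstar / (6 * (a t) ^ 2) + D / (a t) ^ 3) :
    ∀ t ∈ I, a'' t / a t = Λ/3 - (1/3) * C * (a t) ^ 2 - D / (2 * (a t) ^ 3) :=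
  friedmann_acceleration_equation_general I C Λ Rstar D a a' a'' ha' ha'' hapos hODE hFI
end

section
/- Let w > −1, t₀ ∈ ℝ, T > −t₀, and let D, a₀ > 0 and C, Λ, R⋆ ∈ ℝ. Define F : (0,∞) → ℝ by F(x) = D·a₀^{3w}·x^{−(3w+1)} − R⋆/6 + (Λ/3)x² − (C/6)x⁴. Let a : [−t₀, T) → ℝ be continuous with a(−t₀) = 0, differentiable on (−t₀, T) with a(t) > 0 and a'(t) > 0 there, and satisfying a'(t)² = F(a(t)) for all t ∈ (−t₀, T). Then for every t ∈ (−t₀, T), t + t₀ = ∫₀^{a(t)} F(x)^{−1/2} dx (the integral being finite). -/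
/-!
Separation of variables. Since `ȧ > 0`, the scale factor is strictly increasing on `[-t₀, t]`,
hence a bijection onto `(0, a(t)]`, and `ȧ · F(a)^{-1/2} = ȧ · (ȧ²)^{-1/2} = 1`. The
one-dimensional change of variables `x = a(u)` for injective differentiable maps, which needs
neither continuity of `F` nor of `ȧ`, therefore turns `∫₀^{a(t)} F(x)^{-1/2} dx` into
`∫_{-t₀}^{t} 1 du = t + t₀`; the same substitution shows that the integrand is integrable.
-/

open Set MeasureTheory

lemma mul_rpow_sq_neg_half {y : ℝ} (hy : 0 < y) : y * (y ^ 2) ^ (-(1:ℝ)/2) = 1 := by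
  rw [← Real.rpow_natCast, ← Real.rpow_mul hy.le]
  norm_num [Real.rpow_neg_one, hy.ne']

section ChangeOfVariables

variable {f f' g : ℝ → ℝ} {a b : ℝ}

theorem integrableOn_and_integral_eq_sub_of_deriv_mul_comp_eq_one (hab : a ≤ b)
    (hf : ContinuousOn f (Icc a b)) (hf' : ∀ x ∈ Ioc a b, HasDerivAt f (f' x) x)
    (hpos : ∀ x ∈ Ioc a b, 0 < f' x) (hg : ∀ x ∈ Ioc a b, f' x * g (f x) = 1) :
    IntegrableOn g (Ioc (f a) (f b)) ∧ ∫ y in f a..f b, g y = b - a := by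
  have hmono : StrictMonoOn f (Icc a b) := by
    refine strictMonoOn_of_deriv_pos (convex_Icc a b) hf fun x hx => ?_
    rw [interior_Icc] at hx
    rw [(hf' x (Ioo_subset_Ioc_self hx)).deriv]
    exact hpos x (Ioo_subset_Ioc_self hx)
  have himage : f '' Ioc a b = Ioc (f a) (f b) := hf.image_Ioc_of_strictMonoOn hab hmono
  have hinj : InjOn f (Ioc a b) := hmono.injOn.mono Ioc_subset_Icc_self
  have hderiv : ∀ x ∈ Ioc a b, HasDerivWithinAt f (f' x) (Ioc a b) x :=
    fun x hx => (hf' x hx).hasDerivWithinAt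
  have hone : EqOn (fun x => |f' x| • g (f x)) (fun _ => 1) (Ioc a b) := fun x hx => by
    simp only [smul_eq_mul, abs_of_pos (hpos x hx), hg x hx]
  constructor
  · rw [← himage,
      integrableOn_image_iff_integrableOn_abs_deriv_smul measurableSet_Ioc hderiv hinj]
    exact (integrableOn_const measure_Ioc_lt_top.ne).congr_fun hone.symm measurableSet_Ioc
  · rw [intervalIntegral.integral_of_le (hmono.monotoneOn ⟨le_rfl, hab⟩ ⟨hab, le_rfl⟩ hab),
      ← himage, integral_image_eq_integral_abs_deriv_smul measurableSet_Ioc hderiv hinj,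
      setIntegral_congr_fun measurableSet_Ioc hone]
    simp [hab]

end ChangeOfVariables

theorem friedmann_formal_integration_general
    (t₀ T : ℝ)
    (F : ℝ → ℝ)
    (a a' : ℝ → ℝ)
    (hacont : ContinuousOn a (Set.Ico (-t₀) T))
    (ha0 : a (-t₀) = 0)
    (hderiv : ∀ t ∈ Set.Ioo (-t₀) T, HasDerivAt a (a' t) t)
    (ha'pos : ∀ t ∈ Set.Ioo (-t₀) T, a' t > 0)
    (hODE : ∀ t ∈ Set.Ioo (-t₀) T, (a' t) ^ 2 = F (a t)) :
    ∀ t ∈ Set.Ioo (-t₀) T,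
      MeasureTheory.IntegrableOn (fun x => F x ^ (-(1:ℝ)/2)) (Set.Ioc 0 (a t)) ∧
      t + t₀ = ∫ x in (0:ℝ)..(a t), F x ^ (-(1:ℝ)/2) := by
  intro t ht
  have hsub : Ioc (-t₀) t ⊆ Ioo (-t₀) T := fun u hu => ⟨hu.1, hu.2.trans_lt ht.2⟩
  obtain ⟨hint, heq⟩ := integrableOn_and_integral_eq_sub_of_deriv_mul_comp_eq_one
    (g := fun x => F x ^ (-(1:ℝ)/2)) ht.1.le
    (hacont.mono fun u hu => ⟨hu.1, hu.2.trans_lt ht.2⟩)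
    (fun u hu => hderiv u (hsub hu)) (fun u hu => ha'pos u (hsub hu))
    (fun u hu => by rw [← hODE u (hsub hu), mul_rpow_sq_neg_half (ha'pos u (hsub hu))])
  rw [ha0] at hint heq
  exact ⟨hint, by rw [heq, sub_neg_eq_add]⟩

/-- Formal integration of the modified Friedmann equation `ȧ² = F(a)` with
`F(x) = D a₀^{3w} x^{-(3w+1)} - R⋆/6 + (Λ/3)x² - (C/6)x⁴` and initial condition `a(-t₀) = 0`:
for every `t`, `t + t₀ = ∫₀^{a(t)} F(x)^{-1/2} dx`, the integral being finite. -/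
theorem friedmann_formal_integration
    (w t₀ T D a₀ C Λ Rstar : ℝ)
    (hw : w > -1) (hT : T > -t₀) (hD : D > 0) (ha₀ : a₀ > 0)
    (F : ℝ → ℝ)
    (hF : ∀ x ∈ Set.Ioi (0:ℝ), F x
      = D * a₀ ^ (3*w) * x ^ (-(3*w+1)) - Rstar/6 + (Λ/3) * x ^ 2 - (C/6) * x ^ 4)
    (a a' : ℝ → ℝ)
    (hacont : ContinuousOn a (Set.Ico (-t₀) T))
    (ha0 : a (-t₀) = 0)
    (hderiv : ∀ t ∈ Set.Ioo (-t₀) T, HasDerivAt a (a' t) t)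
    (hapos : ∀ t ∈ Set.Ioo (-t₀) T, a t > 0)
    (ha'pos : ∀ t ∈ Set.Ioo (-t₀) T, a' t > 0)
    (hODE : ∀ t ∈ Set.Ioo (-t₀) T, (a' t) ^ 2 = F (a t)) :
    ∀ t ∈ Set.Ioo (-t₀) T,
      MeasureTheory.IntegrableOn (fun x => F x ^ (-(1:ℝ)/2)) (Set.Ioc 0 (a t)) ∧
      t + t₀ = ∫ x in (0:ℝ)..(a t), F x ^ (-(1:ℝ)/2) :=
  friedmann_formal_integration_general t₀ T F a a' hacont ha0 hderiv ha'pos hODE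
end

section
/- Let C, D > 0 and a > 0 with C·a⁵ < 6D. Then ∫₀^a (D/x − (C/6)x⁴)^{−1/2} dx = (2/(3√D))·a^{3/2}·∑_{n=0}^∞ [(1/2)_n·(3/10)_n / ((13/10)_n·n!)]·(C·a⁵/(6D))ⁿ, where (q)_n denotes the ascending Pochhammer symbol q(q+1)⋯(q+n−1), the series on the right converging absolutely. (This is the Gauss hypergeometric expression t + t₀ = (2/(3√D))a^{3/2}·₂F₁(1/2, 3/10; 13/10; (C/(6D))a⁵) for the scale factor in a matter-dominated universe.) -/
/-!
Factor `D/x - (C/6)x⁴ = (D/x)(1 - k x⁵)` with `k = C/(6D)` and expand `(1 - y)^{-1/2}` in the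
binomial series `∑ (1/2)_n/n! yⁿ`. The integrand becomes `D^{-1/2} ∑ (1/2)_n/n! kⁿ x^{5n+1/2}`, a
series of nonnegative terms that can be integrated termwise over `[0, a]`. Integration produces
the factor `1/(5n + 3/2) = (2/3)·(3/10)_n/(13/10)_n`, which turns the binomial coefficients into
those of `₂F₁(1/2, 3/10; 13/10; ·)`; the series converges since it is dominated by the binomial one.
-/

open Real MeasureTheory

theorem Ring.choose_add_sub_one_eq_ascPochhammer_div {K : Type*} [Field K] [CharZero K] (a : K)
    (n : ℕ) : Ring.choose (a + n - 1) n = (ascPochhammer K n).eval a / n.factorial := by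
  rw [Ring.choose_eq_smul, Polynomial.descPochhammer_smeval_eq_ascPochhammer,
    Polynomial.ascPochhammer_smeval_eq_eval, smul_eq_mul, inv_mul_eq_div]
  ring_nf

theorem hasSum_ascPochhammer_div_factorial_mul_pow (a : ℝ) {x : ℝ} (hx : |x| < 1) :
    HasSum (fun n => (ascPochhammer ℝ n).eval a / n.factorial * x ^ n) ((1 - x) ^ (-a)) := by
  have h := (one_div_one_sub_rpow_hasFPowerSeriesOnBall_zero a).hasSum
    (y := x) (by simpa [enorm_eq_nnnorm, ← NNReal.coe_lt_one] using hx)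
  simp only [FormalMultilinearSeries.ofScalars_apply_eq,
    Ring.choose_add_sub_one_eq_ascPochhammer_div, zero_add, smul_eq_mul] at h
  rwa [rpow_neg (by linarith [abs_lt.1 hx]), ← one_div]

theorem ascPochhammer_eval_mul_add {R : Type*} [CommSemiring R] (a : R) (n : ℕ) :
    (ascPochhammer R n).eval a * (a + n) = a * (ascPochhammer R n).eval (a + 1) := by
  have h₁ := congrArg (Polynomial.eval a) (ascPochhammer_succ_right R n)
  have h₂ := congrArg (Polynomial.eval a) (ascPochhammer_succ_left R n)
  simp only [Polynomial.eval_mul, Polynomial.eval_add, Polynomial.eval_X, Polynomial.eval_natCast,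
    Polynomial.eval_comp, Polynomial.eval_one] at h₁ h₂
  rw [← h₁, h₂]

theorem ascPochhammer_mul_div_ascPochhammer_add_one (a : ℝ) {b : ℝ} (hb : 0 < b) (n : ℕ) :
    (ascPochhammer ℝ n).eval a * (ascPochhammer ℝ n).eval b
        / ((ascPochhammer ℝ n).eval (b + 1) * n.factorial)
      = (ascPochhammer ℝ n).eval a / n.factorial * (b / (b + n)) := by
  have hpos := ascPochhammer_pos n (b + 1) (by linarith)
  have hbn : b + n ≠ 0 := by positivity
  field_simp
  linear_combination (ascPochhammer ℝ n).eval a * ascPochhammer_eval_mul_add b n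

theorem summable_ascPochhammer_div_factorial_mul_div_add_mul_pow {a b z : ℝ} (ha : 0 < a)
    (hb : 0 < b) (hz₀ : 0 ≤ z) (hz₁ : z < 1) :
    Summable fun n : ℕ => (ascPochhammer ℝ n).eval a / n.factorial * (b / (b + n)) * z ^ n := by
  have hc : ∀ n, 0 ≤ (ascPochhammer ℝ n).eval a / n.factorial * z ^ n := fun n => by
    have := ascPochhammer_pos n a ha
    positivity
  refine Summable.of_nonneg_of_le (fun n => ?_) (fun n => ?_)
    (hasSum_ascPochhammer_div_factorial_mul_pow a (abs_lt.2 ⟨by linarith, hz₁⟩)).summable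
  · rw [mul_right_comm]
    exact mul_nonneg (hc n) (by positivity)
  · rw [mul_right_comm]
    exact mul_le_of_le_one_right (hc n) ((div_le_one (by positivity)).2 (by simp))

theorem integral_tsum_mul_rpow {a : ℝ} (ha : 0 ≤ a) {g p : ℕ → ℝ} (hg : ∀ n, 0 ≤ g n)
    (hp : ∀ n, -1 < p n) (hsum : Summable fun n => g n * (a ^ (p n + 1) / (p n + 1))) :
    ∫ x in 0..a, ∑' n, g n * x ^ p n = ∑' n, g n * (a ^ (p n + 1) / (p n + 1)) := by
  have hint : ∀ n, IntegrableOn (fun x => g n * x ^ p n) (Set.Ioc 0 a) :=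
    fun n => ((intervalIntegral.intervalIntegrable_rpow' (hp n)).const_mul (g n)).1
  have hval : ∀ n, ∫ x in Set.Ioc 0 a, g n * x ^ p n = g n * (a ^ (p n + 1) / (p n + 1)) := by
    intro n
    rw [← intervalIntegral.integral_of_le ha, intervalIntegral.integral_const_mul,
      integral_rpow (Or.inl (hp n)), zero_rpow (by linarith [hp n]), sub_zero]
  have hnorm : ∀ n, ∫ x in Set.Ioc 0 a, ‖g n * x ^ p n‖ = ∫ x in Set.Ioc 0 a, g n * x ^ p n :=
    fun n => setIntegral_congr_fun measurableSet_Ioc fun x hx =>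
      norm_of_nonneg (mul_nonneg (hg n) (rpow_nonneg hx.1.le _))
  rw [intervalIntegral.integral_of_le ha,
    ← integral_tsum_of_summable_integral_norm hint (by simpa only [hnorm, hval] using hsum)]
  exact tsum_congr hval

theorem matter_integrand_eq_tsum {C D x : ℝ} (hC : 0 ≤ C) (hD : 0 < D) (hx : 0 < x)
    (hlt : C * x ^ 5 < 6 * D) :
    (D / x - (C / 6) * x ^ 4) ^ (-(1:ℝ)/2)
      = ∑' n : ℕ, (ascPochhammer ℝ n).eval (1/2 : ℝ) / n.factorial * (C / (6 * D)) ^ n / √D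
          * x ^ (5 * (n : ℝ) + 1/2) := by
  set k := C / (6 * D)
  have hkx : |k * x ^ 5| < 1 := by
    rw [abs_of_nonneg (by positivity), div_mul_eq_mul_div, div_lt_one (by positivity)]
    exact hlt
  have hfactor : D / x - (C / 6) * x ^ 4 = D / x * (1 - k * x ^ 5) := by
    simp only [k]
    field_simp
  have hsqrt : (D / x) ^ (-(1:ℝ)/2) = x ^ (1/2 : ℝ) / √D := by
    rw [neg_div, rpow_neg (by positivity), div_rpow hD.le hx.le, inv_div, sqrt_eq_rpow]
  have hpow (n : ℕ) : x ^ (5 * (n : ℝ) + 1/2) = (x ^ 5) ^ n * x ^ (1/2 : ℝ) := by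
    rw [show 5 * (n : ℝ) = (5 * n : ℕ) by push_cast; ring, rpow_add hx, rpow_natCast, pow_mul]
  rw [hfactor, mul_rpow (by positivity) (by linarith [abs_lt.1 hkx]), hsqrt, neg_div,
    ← (hasSum_ascPochhammer_div_factorial_mul_pow (1/2) hkx).tsum_eq, ← tsum_mul_left]
  refine tsum_congr fun n => ?_
  rw [hpow, mul_pow]
  ring

/-- In a matter-dominated universe in Conformal Killing gravity (`w = 0`, `R⋆ = 0`, `Λ = 0`),
the time integral `∫₀^a (D/x - (C/6)x⁴)^{-1/2} dx` equals the Gauss hypergeometric expression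
`(2/(3√D)) a^{3/2} ₂F₁(1/2, 3/10; 13/10; C a⁵/(6D))`, the hypergeometric series converging
absolutely. Here `(q)_n` is the ascending Pochhammer symbol. -/
theorem matter_dominated_hypergeometric
    (C D a : ℝ) (hC : C > 0) (hD : D > 0) (ha : a > 0) (hlt : C * a ^ 5 < 6 * D) :
    Summable (fun n : ℕ =>
      |((ascPochhammer ℝ n).eval (1/2 : ℝ) * (ascPochhammer ℝ n).eval (3/10 : ℝ)
          / ((ascPochhammer ℝ n).eval (13/10 : ℝ) * (n.factorial : ℝ)))
        * (C * a ^ 5 / (6 * D)) ^ n|) ∧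
    (∫ x in (0:ℝ)..a, (D / x - (C/6) * x ^ 4) ^ (-(1:ℝ)/2))
      = (2 / (3 * Real.sqrt D)) * a ^ ((3:ℝ)/2)
        * ∑' n : ℕ,
          ((ascPochhammer ℝ n).eval (1/2 : ℝ) * (ascPochhammer ℝ n).eval (3/10 : ℝ)
              / ((ascPochhammer ℝ n).eval (13/10 : ℝ) * (n.factorial : ℝ)))
            * (C * a ^ 5 / (6 * D)) ^ n := by
  rw [show (13/10 : ℝ) = 3/10 + 1 by norm_num]
  simp_rw [ascPochhammer_mul_div_ascPochhammer_add_one (1/2) (show (0:ℝ) < 3/10 by norm_num)]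
  set z := C * a ^ 5 / (6 * D)
  have hsum := summable_ascPochhammer_div_factorial_mul_div_add_mul_pow one_half_pos
    (show (0:ℝ) < 3/10 by norm_num) (by positivity) ((div_lt_one (by positivity)).2 hlt)
  refine ⟨hsum.abs, ?_⟩
  have hterm (n : ℕ) : (ascPochhammer ℝ n).eval (1/2 : ℝ) / n.factorial * (C / (6 * D)) ^ n / √D
      * (a ^ (5 * (n : ℝ) + 1/2 + 1) / (5 * (n : ℝ) + 1/2 + 1))
      = 2 / (3 * √D) * a ^ (3/2 : ℝ) * ((ascPochhammer ℝ n).eval (1/2 : ℝ) / n.factorial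
          * (3/10 / (3/10 + n)) * z ^ n) := by
    have hpow : a ^ (5 * (n : ℝ) + 1/2 + 1) = (a ^ 5) ^ n * a ^ (3/2 : ℝ) := by
      rw [show 5 * (n : ℝ) + 1/2 + 1 = (5 * n : ℕ) + 3/2 by push_cast; ring, rpow_add ha,
        rpow_natCast, pow_mul]
    rw [hpow]
    simp only [z]
    field_simp
    ring
  have hlt_Ioc : ∀ x ∈ Set.uIoc 0 a, C * x ^ 5 < 6 * D := fun x hx => by
    rw [Set.uIoc_of_le ha.le] at hx
    exact (mul_le_mul_of_nonneg_left (pow_le_pow_left₀ hx.1.le hx.2 5) hC.le).trans_lt hlt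
  rw [intervalIntegral.integral_congr_ae (Filter.Eventually.of_forall fun x hx =>
      matter_integrand_eq_tsum hC.le hD (Set.uIoc_of_le ha.le ▸ hx).1 (hlt_Ioc x hx)),
    integral_tsum_mul_rpow ha.le, ← tsum_mul_left]
  · exact tsum_congr hterm
  · exact fun n => by have := ascPochhammer_pos n (1/2 : ℝ) one_half_pos; positivity
  · exact fun n => by linarith [n.cast_nonneg (α := ℝ)]
  · exact (hsum.mul_left _).congr fun n => (hterm n).symm
end

section
/- Let R > 0, A > 0, C ∈ ℝ, set k = √(R/3), and define a : (0,∞) → ℝ by a(t) = A·√(sinh(k·t)). Define (in units 8πG = 1) the energy density and pressure by the modified Friedmann equations with R⋆ = 0 and Λ = 0: ρ(t) = 3(a'(t)/a(t))² + (C/2)a(t)² and p(t) = −(a'(t)/a(t))² − 2a''(t)/a(t) − (5/6)C·a(t)². Then for all t > 0: ρ(t) = (R/4)·coth²(k·t) + (C·A²/2)·sinh(k·t) and ρ(t) − 3p(t) = R + 3C·A²·sinh(k·t). -/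
/-- The hyperbolic cotangent. -/
noncomputable def Real.coth (x : ℝ) : ℝ := Real.cosh x / Real.sinh x

private lemma ckg_hasDerivAt_a (A k t : ℝ) (hs : 0 < Real.sinh (k*t)) :
    HasDerivAt (fun t => A * Real.sqrt (Real.sinh (k*t)))
      (A * (Real.cosh (k*t) * k / (2 * Real.sqrt (Real.sinh (k*t))))) t := by
  have hkt : HasDerivAt (fun t : ℝ => k*t) k t := by
    simpa using (hasDerivAt_id t).const_mul k
  have h1 : HasDerivAt (fun t : ℝ => Real.sinh (k*t)) (Real.cosh (k*t) * k) t :=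
    (Real.hasDerivAt_sinh (k*t)).comp t hkt
  exact (h1.sqrt hs.ne').const_mul A

private lemma ckg_hasDerivAt_da (A k t : ℝ) (hs : 0 < Real.sinh (k*t)) :
    HasDerivAt (fun t => A * (Real.cosh (k*t) * k / (2 * Real.sqrt (Real.sinh (k*t)))))
      (A * ((Real.sinh (k*t) * k * k * (2 * Real.sqrt (Real.sinh (k*t)))
        - Real.cosh (k*t) * k *
          (2 * (Real.cosh (k*t) * k / (2 * Real.sqrt (Real.sinh (k*t))))))
        / (2 * Real.sqrt (Real.sinh (k*t)))^2)) t := by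
  have hkt : HasDerivAt (fun t : ℝ => k*t) k t := by
    simpa using (hasDerivAt_id t).const_mul k
  have hnum : HasDerivAt (fun t => Real.cosh (k*t) * k) (Real.sinh (k*t) * k * k) t := by
    have := ((Real.hasDerivAt_cosh (k*t)).comp t hkt).mul_const k
    simpa [mul_assoc] using this
  have hsinh : HasDerivAt (fun t : ℝ => Real.sinh (k*t)) (Real.cosh (k*t) * k) t :=
    (Real.hasDerivAt_sinh (k*t)).comp t hkt
  have hden : HasDerivAt (fun t => 2 * Real.sqrt (Real.sinh (k*t)))
      (2 * (Real.cosh (k*t) * k / (2 * Real.sqrt (Real.sinh (k*t))))) t :=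
    (hsinh.sqrt hs.ne').const_mul 2
  have hq : 0 < Real.sqrt (Real.sinh (k*t)) := Real.sqrt_pos.2 hs
  have hden0 : (2:ℝ) * Real.sqrt (Real.sinh (k*t)) ≠ 0 := by positivity
  exact (hnum.div hden hden0).const_mul A

/-- For the constant-curvature scale factor `a(t) = A √(sinh(kt))` with `k = √(R/3)`,
the modified Friedmann equations of Conformal Killing gravity with `R⋆ = 0`, `Λ = 0`
(units `8πG = 1`), `ρ = 3(ȧ/a)² + (C/2)a²` and `p = -(ȧ/a)² - 2ä/a - (5/6)Ca²`, give
`ρ = (R/4) coth²(kt) + (CA²/2) sinh(kt)` and `ρ - 3p = R + 3CA² sinh(kt)`. -/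
theorem constant_curvature_density_and_pressure
    (R A C : ℝ) (hR : R > 0) (hA : A > 0)
    (k : ℝ) (hk : k = Real.sqrt (R/3))
    (a : ℝ → ℝ) (ha : ∀ t, a t = A * Real.sqrt (Real.sinh (k * t)))
    (ρ p : ℝ → ℝ)
    (hρ : ∀ t, ρ t = 3 * (deriv a t / a t) ^ 2 + (C/2) * (a t) ^ 2)
    (hp : ∀ t, p t = -(deriv a t / a t) ^ 2 - 2 * (deriv (deriv a) t) / a t
      - (5/6) * C * (a t) ^ 2) :
    ∀ t > (0:ℝ),
      ρ t = (R/4) * Real.coth (k * t) ^ 2 + (C * A ^ 2 / 2) * Real.sinh (k * t) ∧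
      ρ t - 3 * p t = R + 3 * C * A ^ 2 * Real.sinh (k * t) := by
  have hk0 : 0 < k := by
    rw [hk]; exact Real.sqrt_pos.2 (by linarith)
  have hk2 : k ^ 2 = R / 3 := by
    rw [hk, Real.sq_sqrt (by linarith : (0:ℝ) ≤ R/3)]
  have haf : a = fun t => A * Real.sqrt (Real.sinh (k*t)) := funext ha
  -- deriv a agrees with the explicit formula on (0, ∞)
  have hda : ∀ t > (0:ℝ), deriv a t
      = A * (Real.cosh (k*t) * k / (2 * Real.sqrt (Real.sinh (k*t)))) := by
    intro t ht
    have hs : 0 < Real.sinh (k*t) := Real.sinh_pos_iff.2 (mul_pos hk0 ht)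
    rw [haf]; exact (ckg_hasDerivAt_a A k t hs).deriv
  intro t ht
  have hs : 0 < Real.sinh (k*t) := Real.sinh_pos_iff.2 (mul_pos hk0 ht)
  have hq : 0 < Real.sqrt (Real.sinh (k*t)) := Real.sqrt_pos.2 hs
  have hq2 : Real.sqrt (Real.sinh (k*t)) ^ 2 = Real.sinh (k*t) := Real.sq_sqrt hs.le
  have hdda : deriv (deriv a) t
      = A * ((Real.sinh (k*t) * k * k * (2 * Real.sqrt (Real.sinh (k*t)))
        - Real.cosh (k*t) * k *
          (2 * (Real.cosh (k*t) * k / (2 * Real.sqrt (Real.sinh (k*t))))))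
        / (2 * Real.sqrt (Real.sinh (k*t)))^2) := by
    have hev : deriv a =ᶠ[nhds t]
        fun t => A * (Real.cosh (k*t) * k / (2 * Real.sqrt (Real.sinh (k*t)))) := by
      filter_upwards [isOpen_Ioi.mem_nhds (Set.mem_Ioi.2 ht)] with t' ht'
      exact hda t' ht'
    rw [hev.deriv_eq]
    exact (ckg_hasDerivAt_da A k t hs).deriv
  have hA0 : A ≠ 0 := hA.ne'
  -- abbreviations
  set q := Real.sqrt (Real.sinh (k*t)) with hqdef
  set ch := Real.cosh (k*t) with hchdef
  have hat : a t = A * q := ha t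
  have hdat : deriv a t = A * (ch * k / (2*q)) := hda t ht
  have hsinh_eq : Real.sinh (k*t) = q^2 := hq2.symm
  have hR3 : R = 3 * k^2 := by linarith
  constructor
  · rw [hρ t, hat, hdat, Real.coth, hsinh_eq, hR3]
    field_simp
    ring
  · rw [hρ t, hp t, hat, hdat, hdda, hsinh_eq, hR3]
    field_simp
    ring
end

section
/- Let R > 0, A > 0, C > 0, k = √(R/3), and define ρ, p : (0,∞) → ℝ by ρ(t) = (R/4)·coth²(k·t) + (C·A²/2)·sinh(k·t) and p(t) = (1/3)[ρ(t) − R − 3C·A²·sinh(k·t)]. Then lim_{t→0⁺} p(t)/ρ(t) = 1/3 and lim_{t→∞} p(t)/ρ(t) = −5/3. (The cosmological fluid behaves as radiation, p ≈ ρ/3, in the early universe and as phantom energy, p ≈ −(5/3)ρ, in the late universe.) -/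
/-!
With `s = sinh θ` we have `coth² θ = 1 + s⁻²` and `p / ρ = (1 - (R + 3CA² s) / ρ) / 3`.
As `θ → 0⁺`, `ρ` blows up like `(R/4) s⁻²` while `R + 3CA² s → R`, so `p / ρ → 1/3`.
As `θ → ∞`, `ρ ~ (CA²/2) s` and `R + 3CA² s ~ 3CA² s`, so their quotient tends to `6`
and `p / ρ → (1 - 6) / 3 = -5/3`.
-/

open Filter Topology

namespace Real

theorem coth_sq {x : ℝ} (hx : x ≠ 0) : coth x ^ 2 = 1 + (sinh x)⁻¹ ^ 2 := by
  have hs : sinh x ≠ 0 := sinh_ne_zero.mpr hx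
  rw [coth, div_pow, cosh_sq]
  field_simp

theorem tendsto_sinh_atTop : Tendsto sinh atTop atTop :=
  sinhOrderIso.tendsto_atTop

theorem tendsto_sinh_nhdsGT_zero : Tendsto sinh (𝓝[>] 0) (𝓝[>] 0) := by
  have h := continuous_sinh.continuousWithinAt.tendsto_nhdsWithin (x := 0) (t := Set.Ioi 0)
    fun _ hx => sinh_pos_iff.mpr hx
  rwa [sinh_zero] at h

theorem tendsto_coth_sq_nhdsGT_zero : Tendsto (fun x => coth x ^ 2) (𝓝[>] 0) atTop := by
  have h : Tendsto (fun x => 1 + (sinh x)⁻¹ ^ 2) (𝓝[>] 0) atTop :=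
    tendsto_atTop_add_const_left _ 1
      ((tendsto_pow_atTop two_ne_zero).comp tendsto_sinh_nhdsGT_zero.inv_tendsto_nhdsGT_zero)
  refine h.congr' ?_
  filter_upwards [self_mem_nhdsWithin] with x hx
  exact (coth_sq hx.ne').symm

theorem tendsto_coth_sq_atTop : Tendsto (fun x => coth x ^ 2) atTop (𝓝 1) := by
  have h : Tendsto (fun x => 1 + (sinh x)⁻¹ ^ 2) atTop (𝓝 (1 + 0 ^ 2)) :=
    tendsto_const_nhds.add (tendsto_sinh_atTop.inv_tendsto_atTop.pow 2)
  rw [zero_pow two_ne_zero, add_zero] at h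
  refine h.congr' ?_
  filter_upwards [eventually_ne_atTop 0] with x hx
  exact (coth_sq hx).symm

end Real

namespace ConformalKillingGravity

open Real

/-- `a` stands for `C A²`; the pressure is read off from `ρ - 3p = R + 3CA² sinh θ`. -/
noncomputable def energyDensity (R a θ : ℝ) : ℝ := R / 4 * coth θ ^ 2 + a / 2 * sinh θ

noncomputable def pressure (R a θ : ℝ) : ℝ := (energyDensity R a θ - R - 3 * a * sinh θ) / 3

variable {R a : ℝ}

theorem pressure_div_energyDensity {θ : ℝ} (h : energyDensity R a θ ≠ 0) :
    pressure R a θ / energyDensity R a θ =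
      (1 - (R + 3 * a * sinh θ) / energyDensity R a θ) / 3 := by
  rw [pressure]
  field_simp
  ring

theorem tendsto_energyDensity_nhdsGT_zero (hR : 0 < R) :
    Tendsto (energyDensity R a) (𝓝[>] 0) atTop := by
  have hsinh : Tendsto (fun θ => a / 2 * sinh θ) (𝓝[>] 0) (𝓝 (a / 2 * 0)) :=
    (tendsto_sinh_nhdsGT_zero.mono_right nhdsWithin_le_nhds).const_mul _
  rw [mul_zero] at hsinh
  exact (tendsto_coth_sq_nhdsGT_zero.const_mul_atTop (by positivity)).atTop_add hsinh

theorem tendsto_energyDensity_div_sinh_atTop :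
    Tendsto (fun θ => energyDensity R a θ / sinh θ) atTop (𝓝 (a / 2)) := by
  have h : Tendsto (fun θ => R / 4 * (coth θ ^ 2 / sinh θ) + a / 2) atTop
      (𝓝 (R / 4 * 0 + a / 2)) :=
    ((tendsto_coth_sq_atTop.div_atTop tendsto_sinh_atTop).const_mul _).add tendsto_const_nhds
  rw [mul_zero, zero_add] at h
  refine h.congr' ?_
  filter_upwards [tendsto_sinh_atTop.eventually_ne_atTop 0] with θ hθ
  rw [energyDensity]
  field_simp

theorem tendsto_pressure_div_energyDensity_nhdsGT_zero (hR : 0 < R) :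
    Tendsto (fun θ => pressure R a θ / energyDensity R a θ) (𝓝[>] 0) (𝓝 (1 / 3)) := by
  have hρ := tendsto_energyDensity_nhdsGT_zero (a := a) hR
  have hsinh : Tendsto (fun θ => R + 3 * a * sinh θ) (𝓝[>] 0) (𝓝 (R + 3 * a * 0)) :=
    tendsto_const_nhds.add ((tendsto_sinh_nhdsGT_zero.mono_right nhdsWithin_le_nhds).const_mul _)
  have h : Tendsto (fun θ => (1 - (R + 3 * a * sinh θ) / energyDensity R a θ) / 3) (𝓝[>] 0)
      (𝓝 ((1 - 0) / 3)) :=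
    ((tendsto_const_nhds.sub (hsinh.div_atTop hρ)).div_const 3)
  rw [sub_zero] at h
  refine h.congr' ?_
  filter_upwards [hρ.eventually_ne_atTop 0] with θ hθ
  exact (pressure_div_energyDensity hθ).symm

theorem tendsto_pressure_div_energyDensity_atTop (ha : a ≠ 0) :
    Tendsto (fun θ => pressure R a θ / energyDensity R a θ) atTop (𝓝 (-(5 / 3))) := by
  have ha2 : a / 2 ≠ 0 := div_ne_zero ha two_ne_zero
  have hρ := tendsto_energyDensity_div_sinh_atTop (R := R) (a := a)
  have hsinh : Tendsto (fun θ => R / sinh θ + 3 * a) atTop (𝓝 (0 + 3 * a)) :=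
    (tendsto_const_nhds.div_atTop tendsto_sinh_atTop).add tendsto_const_nhds
  have h : Tendsto (fun θ => (1 - (R / sinh θ + 3 * a) / (energyDensity R a θ / sinh θ)) / 3)
      atTop (𝓝 ((1 - (0 + 3 * a) / (a / 2)) / 3)) :=
    ((tendsto_const_nhds.sub (hsinh.div hρ ha2)).div_const 3)
  convert h.congr' ?_ using 2
  · field_simp
    ring
  filter_upwards [hρ.eventually_ne ha2, tendsto_sinh_atTop.eventually_ne_atTop 0]
    with θ hρθ hsθ
  rw [pressure_div_energyDensity (div_ne_zero_iff.mp hρθ).1]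
  field_simp

end ConformalKillingGravity

open ConformalKillingGravity in
/-- In the constant-curvature model of Conformal Killing gravity, with
`ρ(t) = (R/4) coth²(kt) + (CA²/2) sinh(kt)` and `p = (1/3)(ρ - R - 3CA² sinh(kt))`,
the equation-of-state ratio `p/ρ` tends to `1/3` as `t → 0⁺` (radiation era) and to
`-5/3` as `t → ∞` (phantom energy era). -/
theorem equation_of_state_limits
    (R A C : ℝ) (hR : R > 0) (hA : A > 0) (hC : C > 0)
    (k : ℝ) (hk : k = Real.sqrt (R/3))
    (ρ p : ℝ → ℝ)
    (hρ : ∀ t, ρ t = (R/4) * Real.coth (k * t) ^ 2 + (C * A ^ 2 / 2) * Real.sinh (k * t))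
    (hp : ∀ t, p t = (1/3) * (ρ t - R - 3 * C * A ^ 2 * Real.sinh (k * t))) :
    Filter.Tendsto (fun t => p t / ρ t) (nhdsWithin 0 (Set.Ioi 0)) (nhds (1/3)) ∧
    Filter.Tendsto (fun t => p t / ρ t) Filter.atTop (nhds (-(5/3))) := by
  have hk0 : 0 < k := hk ▸ Real.sqrt_pos.mpr (by positivity)
  have hratio : (fun t => p t / ρ t) =
      (fun θ => pressure R (C * A ^ 2) θ / energyDensity R (C * A ^ 2) θ) ∘ (k * ·) := by
    ext t
    simp only [Function.comp_apply, hp, hρ, pressure, energyDensity]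
    ring
  rw [hratio]
  exact ⟨(tendsto_pressure_div_energyDensity_nhdsGT_zero hR).comp
      (tendsto_iff_comap.mpr (comap_mulLeft_nhdsGT_zero hk0).ge),
    (tendsto_pressure_div_energyDensity_atTop (by positivity)).comp
      (tendsto_id.const_mul_atTop hk0)⟩
end

section
/- Let θ > 0, θ₀ > 0, Ω_R > 0, Ω_M ∈ ℝ, c ∈ ℝ, and set α = Ω_R·cosh²θ₀. Define Ω_D·D(θ) = tanh²θ₀·[1 + (1−α)/sinh²θ − α·Ω_M/(Ω_R^{3/4}·(α−Ω_R)^{1/4}·sinh^{3/2}θ)] + c·sinhθ/sinhθ₀. Then the Friedmann balance identity holds: tanh²θ₀·coth²θ = Ω_R·(sinhθ₀/sinhθ)² + Ω_M·(sinhθ₀/sinhθ)^{3/2} + Ω_D·D(θ) − c·(sinhθ/sinhθ₀). -/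
/-!
Put `s = sinh θ`, `s₀ = sinh θ₀`. Since `cosh²θ₀ = 1 + s₀²`, one has `α - Ω_R = Ω_R s₀²` and
`tanh²θ₀ · α = Ω_R s₀²`. The first turns the normalisation `Ω_R^{3/4} (α - Ω_R)^{1/4}` into
`Ω_R s₀^{1/2}`, and the second makes the dark matter-like term equal to `-Ω_M (s₀/s)^{3/2}` and
the dark radiation-like term equal to `tanh²θ₀/s² - Ω_R (s₀/s)²`. What remains is
`tanh²θ₀ coth²θ = tanh²θ₀ (1 + 1/s²)`.
-/

open Real

lemma rpow_three_fourths_mul_rpow_one_fourth_mul_sq {r x : ℝ} (hr : 0 ≤ r) (hx : 0 ≤ x) :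
    r ^ ((3:ℝ)/4) * (r * x ^ 2) ^ ((1:ℝ)/4) = r * x ^ ((1:ℝ)/2) := by
  have hx2 : (x ^ 2) ^ ((1:ℝ)/4) = x ^ ((1:ℝ)/2) := by
    rw [← rpow_natCast, ← rpow_mul hx]; norm_num
  rw [mul_rpow hr (sq_nonneg x), hx2, ← mul_assoc, ← rpow_add' hr (by norm_num)]
  norm_num

lemma sq_div_rpow_one_half_mul_rpow_three_halves {a b : ℝ} (ha : 0 < a) (hb : 0 ≤ b) :
    a ^ 2 / (a ^ ((1:ℝ)/2) * b ^ ((3:ℝ)/2)) = (a / b) ^ ((3:ℝ)/2) := by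
  have ha2 : a ^ 2 = a ^ ((1:ℝ)/2) * a ^ ((3:ℝ)/2) := by
    rw [← rpow_add ha, ← rpow_natCast]; norm_num
  rw [ha2, mul_div_mul_left _ _ (rpow_pos_of_pos ha _).ne', div_rpow ha.le hb]

lemma tanh_sq_mul_cosh_sq (x : ℝ) : tanh x ^ 2 * cosh x ^ 2 = sinh x ^ 2 := by
  rw [tanh_eq_sinh_div_cosh, div_pow, div_mul_cancel₀ _ (pow_pos (cosh_pos x) 2).ne']

/-- The Friedmann balance identity determining the dark fluid function `Ω_D D(θ)` in the
constant-curvature Robertson-Walker model of Conformal Killing gravity: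
`H²/H₀² = tanh²θ₀ coth²θ` equals the sum of radiation, matter, dark fluid and conformal
Killing contributions, with `α = Ω_R cosh²θ₀`. -/
theorem friedmann_balance_identity
    (θ θ₀ ΩR ΩM c : ℝ) (hθ : θ > 0) (hθ₀ : θ₀ > 0) (hΩR : ΩR > 0)
    (α : ℝ) (hα : α = ΩR * Real.cosh θ₀ ^ 2)
    (ΩDD : ℝ)
    (hΩDD : ΩDD = Real.tanh θ₀ ^ 2 * (1 + (1 - α) / Real.sinh θ ^ 2
        - α * ΩM / (ΩR ^ ((3:ℝ)/4) * (α - ΩR) ^ ((1:ℝ)/4) * Real.sinh θ ^ ((3:ℝ)/2)))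
      + c * Real.sinh θ / Real.sinh θ₀) :
    Real.tanh θ₀ ^ 2 * (Real.cosh θ / Real.sinh θ) ^ 2
      = ΩR * (Real.sinh θ₀ / Real.sinh θ) ^ 2
        + ΩM * (Real.sinh θ₀ / Real.sinh θ) ^ ((3:ℝ)/2)
        + ΩDD - c * (Real.sinh θ / Real.sinh θ₀) := by
  have hs : 0 < sinh θ := sinh_pos_iff.mpr hθ
  have hs₀ : 0 < sinh θ₀ := sinh_pos_iff.mpr hθ₀
  have hα_sub : α - ΩR = ΩR * sinh θ₀ ^ 2 := by rw [hα, cosh_sq']; ring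
  have hα_tanh : tanh θ₀ ^ 2 * α = ΩR * sinh θ₀ ^ 2 := by
    rw [hα, mul_left_comm, tanh_sq_mul_cosh_sq]
  have hmatter_term : tanh θ₀ ^ 2 * (α * ΩM / (ΩR * sinh θ₀ ^ ((1:ℝ)/2) * sinh θ ^ ((3:ℝ)/2)))
      = ΩM * (sinh θ₀ / sinh θ) ^ ((3:ℝ)/2) := by
    rw [← sq_div_rpow_one_half_mul_rpow_three_halves hs₀ hs.le, mul_div_assoc', mul_comm α ΩM,
      mul_left_comm, hα_tanh]
    field_simp
  have hradiation_term : tanh θ₀ ^ 2 * ((1 - α) / sinh θ ^ 2)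
      = tanh θ₀ ^ 2 / sinh θ ^ 2 - ΩR * (sinh θ₀ / sinh θ) ^ 2 := by
    rw [mul_div_assoc', mul_one_sub, hα_tanh, sub_div, div_pow, mul_div_assoc]
  rw [hΩDD, hα_sub, rpow_three_fourths_mul_rpow_one_fourth_mul_sq hΩR.le hs₀.le,
    mul_sub, mul_add, hmatter_term, hradiation_term, div_pow, cosh_sq']
  field_simp
  ring
end
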